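/- arXiv:2310.20267 — 2 statements merged into one kernel-verified Lean document; each statement's English description precedes it below -/
import Mathlib

section
/- Let A be an invertible N×N real matrix, Z an N×n matrix with orthonormal columns (n < N), and let Y be an N×n matrix with orthonormal columns whose column space equals the column space of A·Z. Then the n×n matrix Yᵀ·A·Z is invertible. -/
open Matrix

theorem stmt0 {N n : ℕ} (hn : n < N)
    (A : Matrix (Fin N) (Fin N) ℝ) (hA : IsUnit A)
    (Z : Matrix (Fin N) (Fin n) ℝ) (hZ : Zᵀ * Z = 1)
    (Y : Matrix (Fin N) (Fin n) ℝ) (hY : Yᵀ * Y = 1)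
    (hcol : LinearMap.range Y.mulVecLin = LinearMap.range (A * Z).mulVecLin) :
    IsUnit (Yᵀ * A * Z) := by
  rw [← Matrix.mulVec_injective_iff_isUnit]
  intro u v huv
  simp only [← Matrix.mulVec_mulVec, Matrix.mul_assoc] at huv
  -- (A*Z) *ᵥ u and v are in range of Y
  have hmem : ∀ w : Fin n → ℝ, (A * Z) *ᵥ w ∈ LinearMap.range Y.mulVecLin := by
    intro w
    rw [hcol]
    exact ⟨w, rfl⟩
  obtain ⟨x, hx⟩ := hmem u
  obtain ⟨y, hy⟩ := hmem v
  simp only [Matrix.mulVecLin_apply] at hx hy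
  have key : ∀ a : Fin n → ℝ, Yᵀ *ᵥ (Y *ᵥ a) = a := by
    intro a
    rw [Matrix.mulVec_mulVec, hY, Matrix.one_mulVec]
  have hAZ : (A * Z) *ᵥ u = (A * Z) *ᵥ v := by
    simp only [← Matrix.mulVec_mulVec] at hx hy ⊢
    rw [← hx, ← hy]
    have : Yᵀ *ᵥ (Y *ᵥ x) = Yᵀ *ᵥ (Y *ᵥ y) := by rw [hx, hy]; exact huv
    rw [key, key] at this
    rw [this]
  have hZu : Z *ᵥ u = Z *ᵥ v := by
    have h2 := congrArg (fun w => A⁻¹ *ᵥ w) hAZ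
    have hinv : ∀ w : Fin N → ℝ, A⁻¹ *ᵥ (A *ᵥ w) = w := fun w => by
      rw [Matrix.mulVec_mulVec, Matrix.nonsing_inv_mul A ((Matrix.isUnit_iff_isUnit_det A).mp hA),
        Matrix.one_mulVec]
    simpa [← Matrix.mulVec_mulVec, hinv] using h2
  calc u = Zᵀ *ᵥ (Z *ᵥ u) := by rw [Matrix.mulVec_mulVec, hZ, Matrix.one_mulVec]
    _ = Zᵀ *ᵥ (Z *ᵥ v) := by rw [hZu]
    _ = v := by rw [Matrix.mulVec_mulVec, hZ, Matrix.one_mulVec]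
end

section
/- Let A be an invertible N×N real matrix, B an N×M real matrix, W an M×m matrix with orthonormal columns such that B·W has full column rank m, Z an N×n matrix with orthonormal columns with m ≤ n < N, and suppose the column space of A⁻¹·B·W is contained in the column space of Z. Let Y be an N×n matrix with orthonormal columns whose column space equals that of A·Z. Then the n×m matrix Yᵀ·B·W has full column rank m. -/
open Matrix

theorem stmt1 {N M n m : ℕ} (hmn : m ≤ n) (hn : n < N)
    (A : Matrix (Fin N) (Fin N) ℝ) (hA : IsUnit A)
    (B : Matrix (Fin N) (Fin M) ℝ)
    (W : Matrix (Fin M) (Fin m) ℝ) (hW : Wᵀ * W = 1)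
    (hBW : LinearMap.ker (B * W).mulVecLin = ⊥)
    (Z : Matrix (Fin N) (Fin n) ℝ) (hZ : Zᵀ * Z = 1)
    (hincl : LinearMap.range (A⁻¹ * B * W).mulVecLin ≤ LinearMap.range Z.mulVecLin)
    (Y : Matrix (Fin N) (Fin n) ℝ) (hY : Yᵀ * Y = 1)
    (hcol : LinearMap.range Y.mulVecLin = LinearMap.range (A * Z).mulVecLin) :
    LinearMap.ker (Yᵀ * B * W).mulVecLin = ⊥ := by
  have hAdet : IsUnit A.det := (Matrix.isUnit_iff_isUnit_det A).mp hA
  rw [eq_bot_iff]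
  intro x hx
  simp only [LinearMap.mem_ker, mulVecLin_apply] at hx
  -- A⁻¹ * B * W *ᵥ x is in range Z
  have h1 : (A⁻¹ * B * W) *ᵥ x ∈ LinearMap.range Z.mulVecLin :=
    hincl ⟨x, rfl⟩
  obtain ⟨u, hu⟩ := h1
  simp only [mulVecLin_apply] at hu
  -- (A*Z) *ᵥ u = (B*W) *ᵥ x
  have h2 : (A * Z) *ᵥ u = (B * W) *ᵥ x := by
    rw [← mulVec_mulVec, hu, mulVec_mulVec, Matrix.mul_assoc A⁻¹ B W,
      ← Matrix.mul_assoc A, Matrix.mul_nonsing_inv A hAdet, Matrix.one_mul]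
  have h3 : (B * W) *ᵥ x ∈ LinearMap.range Y.mulVecLin := by
    rw [hcol]
    exact ⟨u, by simpa [mulVecLin_apply] using h2⟩
  obtain ⟨c, hc⟩ := h3
  simp only [mulVecLin_apply] at hc
  have hc0 : c = 0 := by
    have := congrArg (fun v => Yᵀ *ᵥ v) hc
    simp only [mulVec_mulVec, ← Matrix.mul_assoc] at this hx ⊢
    rw [hY, one_mulVec] at this
    rw [this, hx]
  have hBWx : (B * W) *ᵥ x = 0 := by rw [← hc, hc0, mulVec_zero]
  have : x ∈ LinearMap.ker (B * W).mulVecLin := by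
    simpa [mulVecLin_apply] using hBWx
  rw [hBW] at this
  simpa using this
end
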